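/- arXiv:2403.03901 — 2 statements merged into one kernel-verified Lean document; each statement's English description precedes it below -/
import Mathlib

section
/- Let γ : [0,ℓ] → ℝ^d be an arc-length parametrization of a simple C¹ curve and s ∈ (0,1). There exists a constant c > 0 such that |γ(u) - γ(v)| ≥ c|u - v| for all u, v ∈ [0,ℓ]. -/
/-!
Near the diagonal the curve is almost affine: once `|u - v|` is below the modulus of uniform
continuity of `γ'`, the mean value inequality gives `‖γ u - γ v - (u - v) • γ' v‖ ≤ ½ |u - v|`,
hence `‖γ u - γ v‖ ≥ ½ |u - v|`. Away from the diagonal, the quotient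
`‖γ u - γ v‖ / |u - v|` is continuous and, by injectivity, positive on a compact set, so it is
bounded below there.
-/

open Set

theorem IsCompact.exists_pos_forall_le {X : Type*} [TopologicalSpace X] {K : Set X}
    (hK : IsCompact K) {g : X → ℝ} (hg : ContinuousOn g K) (hpos : ∀ x ∈ K, 0 < g x) :
    ∃ c > 0, ∀ x ∈ K, c ≤ g x := by
  rcases K.eq_empty_or_nonempty with rfl | hne
  · exact ⟨1, one_pos, by simp⟩
  obtain ⟨x₀, hx₀, hmin⟩ := hK.exists_isMinOn hne hg
  exact ⟨g x₀, hpos x₀ hx₀, fun x hx => hmin hx⟩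

theorem IsCompact.exists_pos_mul_dist_le_dist_of_injOn {X Y : Type*} [PseudoMetricSpace X]
    [MetricSpace Y] {K : Set X} (hK : IsCompact K) {f : X → Y} (hf : ContinuousOn f K)
    (hinj : InjOn f K) {δ : ℝ} (hδ : 0 < δ) :
    ∃ c > 0, ∀ x ∈ K, ∀ y ∈ K, δ ≤ dist x y → c * dist x y ≤ dist (f x) (f y) := by
  set S := (K ×ˢ K) ∩ {p | δ ≤ dist p.1 p.2}
  have hS : IsCompact S :=
    (hK.prod hK).inter_right (isClosed_le continuous_const continuous_dist)
  have hdist_pos : ∀ p ∈ S, 0 < dist p.1 p.2 := fun p hp => hδ.trans_le hp.2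
  have hcont : ContinuousOn (fun p : X × X => dist (f p.1) (f p.2) / dist p.1 p.2) S := by
    have hfst : ContinuousOn (fun p : X × X => f p.1) S :=
      hf.comp continuousOn_fst fun p hp => hp.1.1
    have hsnd : ContinuousOn (fun p : X × X => f p.2) S :=
      hf.comp continuousOn_snd fun p hp => hp.1.2
    exact (continuous_dist.comp_continuousOn (hfst.prodMk hsnd)).div continuous_dist.continuousOn
      fun p hp => (hdist_pos p hp).ne'
  have hratio_pos : ∀ p ∈ S, 0 < dist (f p.1) (f p.2) / dist p.1 p.2 := by
    rintro ⟨x, y⟩ hp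
    refine div_pos (dist_pos.mpr fun hxy => (hdist_pos _ hp).ne' ?_) (hdist_pos _ hp)
    rw [hinj hp.1.1 hp.1.2 hxy, dist_self]
  obtain ⟨c, hc, hle⟩ := hS.exists_pos_forall_le hcont hratio_pos
  refine ⟨c, hc, fun x hx y hy hxy => ?_⟩
  exact (le_div_iff₀ (hδ.trans_le hxy)).mp (hle (x, y) ⟨⟨hx, hy⟩, hxy⟩)

variable {E : Type*} [NormedAddCommGroup E] [NormedSpace ℝ E]

theorem sub_mul_abs_sub_le_norm_sub_of_norm_hasDerivWithinAt_sub_le {f f' : ℝ → E} {u v ε : ℝ}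
    (hf : ∀ x ∈ uIcc u v, HasDerivWithinAt f (f' x) (uIcc u v) x)
    (hclose : ∀ x ∈ uIcc u v, ‖f' x - f' v‖ ≤ ε) :
    (‖f' v‖ - ε) * |u - v| ≤ ‖f u - f v‖ := by
  have hlin : ∀ x ∈ uIcc u v,
      HasDerivWithinAt (fun t => f t - t • f' v) (f' x - f' v) (uIcc u v) x := fun x hx => by
    simpa only [Pi.sub_def, id, one_smul] using
      (hf x hx).sub ((hasDerivWithinAt_id x _).smul_const (f' v))
  have hmvt := convex_uIcc u v |>.norm_image_sub_le_of_norm_hasDerivWithin_le hlin hclose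
    right_mem_uIcc left_mem_uIcc
  have hrw : f u - u • f' v - (f v - v • f' v) = (f u - f v) - (u - v) • f' v := by
    rw [sub_smul]; abel
  rw [hrw, Real.norm_eq_abs] at hmvt
  have htri := norm_sub_norm_le ((u - v) • f' v) (f u - f v)
  rw [norm_sub_rev ((u - v) • f' v), norm_smul, Real.norm_eq_abs] at htri
  nlinarith [abs_nonneg (u - v)]

theorem exists_pos_mul_abs_sub_le_norm_sub_of_injOn {a b : ℝ} {f f' : ℝ → E}
    (hf : ∀ x ∈ Icc a b, HasDerivWithinAt f (f' x) (Icc a b) x)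
    (hf' : ContinuousOn f' (Icc a b)) (hne : ∀ x ∈ Icc a b, f' x ≠ 0)
    (hinj : InjOn f (Icc a b)) :
    ∃ c > 0, ∀ u ∈ Icc a b, ∀ v ∈ Icc a b, c * |u - v| ≤ ‖f u - f v‖ := by
  obtain ⟨m, hm, hm_le⟩ := isCompact_Icc.exists_pos_forall_le hf'.norm
    fun x hx => norm_pos_iff.mpr (hne x hx)
  obtain ⟨δ, hδ, hδ_close⟩ := Metric.uniformContinuousOn_iff_le.mp
    (isCompact_Icc.uniformContinuousOn_of_continuous hf') (m / 2) (half_pos hm)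
  have hnear : ∀ u ∈ Icc a b, ∀ v ∈ Icc a b, |u - v| ≤ δ → m / 2 * |u - v| ≤ ‖f u - f v‖ := by
    intro u hu v hv huv
    have hsub : uIcc u v ⊆ Icc a b := uIcc_subset_Icc hu hv
    refine le_trans ?_ (sub_mul_abs_sub_le_norm_sub_of_norm_hasDerivWithinAt_sub_le
      (fun x hx => (hf x (hsub hx)).mono hsub) (ε := m / 2) fun x hx => ?_)
    · nlinarith [hm_le v hv, abs_nonneg (u - v)]
    · rw [← dist_eq_norm]
      exact hδ_close x (hsub hx) v hv
        ((Real.dist_right_le_of_mem_uIcc hx).trans (by rwa [Real.dist_eq]))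
  obtain ⟨c, hc, hfar⟩ := isCompact_Icc.exists_pos_mul_dist_le_dist_of_injOn
    (fun x hx => (hf x hx).continuousWithinAt) hinj hδ
  refine ⟨min (m / 2) c, lt_min (half_pos hm) hc, fun u hu v hv => ?_⟩
  rcases le_total |u - v| δ with huv | huv
  · exact (mul_le_mul_of_nonneg_right (min_le_left _ _) (abs_nonneg _)).trans
      (hnear u hu v hv huv)
  · have := hfar u hu v hv (by rwa [Real.dist_eq])
    rw [Real.dist_eq, dist_eq_norm] at this
    exact (mul_le_mul_of_nonneg_right (min_le_right _ _) (abs_nonneg _)).trans this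

theorem simple_curve_biLipschitz_general (d : ℕ) (ℓ : ℝ)
    (γ γ' : ℝ → EuclideanSpace ℝ (Fin d))
    (hderiv : ∀ u ∈ Set.Icc 0 ℓ, HasDerivAt γ (γ' u) u)
    (hC1 : ContinuousOn γ' (Set.Icc 0 ℓ))
    (harc : ∀ u ∈ Set.Icc 0 ℓ, ‖γ' u‖ = 1)
    (hsimple : Set.InjOn γ (Set.Icc 0 ℓ)) :
    ∃ c > 0, ∀ u ∈ Set.Icc 0 ℓ, ∀ v ∈ Set.Icc 0 ℓ, c * |u - v| ≤ ‖γ u - γ v‖ :=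
  exists_pos_mul_abs_sub_le_norm_sub_of_injOn (fun u hu => (hderiv u hu).hasDerivWithinAt) hC1
    (fun u hu => norm_ne_zero_iff.mp (by rw [harc u hu]; exact one_ne_zero)) hsimple

/-- An arc-length parametrized simple `C¹` curve on `[0,ℓ]` satisfies a uniform lower
bi-Lipschitz bound `|γ(u) - γ(v)| ≥ c|u - v|`. -/
theorem simple_curve_biLipschitz (d : ℕ) (ℓ : ℝ) (hℓ : 0 < ℓ) (s : ℝ)
    (hs : s ∈ Set.Ioo (0 : ℝ) 1)
    (γ γ' : ℝ → EuclideanSpace ℝ (Fin d))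
    (hderiv : ∀ u ∈ Set.Icc 0 ℓ, HasDerivAt γ (γ' u) u)
    (hC1 : ContinuousOn γ' (Set.Icc 0 ℓ))
    (harc : ∀ u ∈ Set.Icc 0 ℓ, ‖γ' u‖ = 1)
    (hsimple : Set.InjOn γ (Set.Icc 0 ℓ)) :
    ∃ c > 0, ∀ u ∈ Set.Icc 0 ℓ, ∀ v ∈ Set.Icc 0 ℓ, c * |u - v| ≤ ‖γ u - γ v‖ :=
  simple_curve_biLipschitz_general d ℓ γ γ' hderiv hC1 harc hsimple
end

section
/- Let γ be a 1-current with compact support whose Fourier transform is represented by a measurable function γ̂ : ℝ^d → ℂ^d with ∫ |γ̂(x)|² |x|^{-(d-s)} dx < ∞ (i.e. γ ∈ C_s). If ‖γ‖_{C_s} := (c(s,d)∫|γ̂|²|x|^{s-d} dx)^{1/2} = 0, then γ = 0 as a 1-current. -/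
open MeasureTheory Real Filter Topology Set
open scoped RealInnerProductSpace
noncomputable section

variable {d : ℕ}

/-- Points of `ℝ^d`. -/
abbrev Ept (d : ℕ) := EuclideanSpace ℝ (Fin d)
/-- Real `1`-forms on `ℝ^d`, identified with their coefficient fields. -/
abbrev RForm (d : ℕ) := Ept d → (Fin d → ℝ)
/-- Complex `1`-forms on `ℝ^d`. -/
abbrev CForm (d : ℕ) := Ept d → (Fin d → ℂ)

/-- The embedding of real `1`-forms into complex `1`-forms. -/
def toCForm (ω : RForm d) : CForm d := fun x i => (ω x i : ℂ)

/-- A test `1`-form: smooth with compact support. -/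
def IsTestForm {F : Type*} [NormedAddCommGroup F] [NormedSpace ℝ F]
    (ω : Ept d → F) : Prop :=
  ContDiff ℝ (⊤ : ℕ∞) ω ∧ HasCompactSupport ω

/-- The `C^n` sup-seminorm `‖D^n ω‖_∞`. -/
def ckSeminorm {F : Type*} [NormedAddCommGroup F] [NormedSpace ℝ F]
    (n : ℕ) (ω : Ept d → F) : ℝ :=
  ⨆ x : Ept d, ‖iteratedFDeriv ℝ n ω x‖

/-- Convergence with respect to all the `C^n` sup-seminorms (the Fréchet topology of
`C₀^∞`). -/
def TendstoCk {F : Type*} [NormedAddCommGroup F] [NormedSpace ℝ F]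
    (f : ℕ → (Ept d → F)) (ω : Ept d → F) : Prop :=
  ∀ n : ℕ, Filter.Tendsto (fun m => ckSeminorm n (f m - ω)) Filter.atTop (nhds 0)

/-- Membership in `C₀^∞(ℝ^d, Λ¹_ℂ)`: a limit, in all `C^n` sup-seminorms, of smooth
compactly supported complex `1`-forms. -/
def InC0inf (ω : CForm d) : Prop :=
  ∃ f : ℕ → CForm d, (∀ m, IsTestForm (f m)) ∧ TendstoCk f ω

/-- A `1`-current: a linear functional on smooth compactly supported real `1`-forms,
continuous in the usual topology of test forms (uniform convergence of all derivatives
within a fixed compact set). -/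
def IsCurrent (γ : RForm d → ℝ) : Prop :=
  (∀ ω η : RForm d, IsTestForm ω → IsTestForm η → γ (ω + η) = γ ω + γ η) ∧
  (∀ (c : ℝ) (ω : RForm d), IsTestForm ω → γ (c • ω) = c * γ ω) ∧
  (∀ K : Set (Ept d), IsCompact K → ∀ (f : ℕ → RForm d) (ω : RForm d),
    (∀ m, IsTestForm (f m) ∧ tsupport (f m) ⊆ K) → IsTestForm ω → tsupport ω ⊆ K →
    TendstoCk f ω → Filter.Tendsto (fun m => γ (f m)) Filter.atTop (nhds (γ ω)))

/-- A current has compact support in `K` if it vanishes on test forms vanishing on `K`. -/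
def HasCptSupp (γ : RForm d → ℝ) (K : Set (Ept d)) : Prop :=
  IsCompact K ∧ ∀ ω : RForm d, IsTestForm ω → (∀ x ∈ K, ω x = 0) → γ ω = 0

/-- `Γ` is a continuous linear extension of the current `γ` to `C₀^∞(ℝ^d, Λ¹_ℂ)`. -/
def IsExtensionOf (γ : RForm d → ℝ) (Γ : CForm d → ℂ) : Prop :=
  (∀ ω η : CForm d, InC0inf ω → InC0inf η → Γ (ω + η) = Γ ω + Γ η) ∧
  (∀ (c : ℝ) (ω : CForm d), InC0inf ω → Γ (c • ω) = c * Γ ω) ∧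
  (∀ (f : ℕ → CForm d) (ω : CForm d), (∀ m, InC0inf (f m)) → InC0inf ω →
    TendstoCk f ω → Filter.Tendsto (fun m => Γ (f m)) Filter.atTop (nhds (Γ ω))) ∧
  (∀ ω : RForm d, IsTestForm ω → Γ (toCForm ω) = γ ω)


/-- The Hermitian pairing `⟨a, b⟩ = ∑ conj(aᵢ) bᵢ` on `ℂ^d`. -/
def cdot {d : ℕ} (a b : Fin d → ℂ) : ℂ := ∑ i, (starRingEnd ℂ) (a i) * b i

/-- The squared Euclidean norm `∑ |aᵢ|²` on `ℂ^d`. -/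
def nsq {d : ℕ} (a : Fin d → ℂ) : ℝ := ∑ i, Complex.normSq (a i)

/-- The componentwise Fourier transform of a complex `1`-form, with the convention
`𝓕[f](ξ) = ∫ f(x) e^{-i x·ξ} dx`. -/
def ftForm (ω : CForm d) : CForm d :=
  fun ξ i => ∫ x : Ept d, Complex.exp (-(Complex.I) * (⟪x, ξ⟫ : ℝ)) * ω x i

/-- The constant `c(s,d) = 2^{d-s} π^{d/2} Γ((d-s)/2)/Γ(s/2)`. -/
def rieszConst (d : ℕ) (s : ℝ) : ℝ :=
  2 ^ ((d : ℝ) - s) * Real.pi ^ ((d : ℝ) / 2) *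
    Real.Gamma (((d : ℝ) - s) / 2) / Real.Gamma (s / 2)

/-- `γ̂` represents the Fourier transform of the current extended by `Γ`:
`𝓕[γ](ω) = γ̄(𝓕[ω]) = ∫ ⟨ω(x), γ̂(x)⟩ dx` for every Schwartz `1`-form `ω`. -/
def IsFourierRep {d : ℕ} (Γ : CForm d → ℂ) (γhat : CForm d) : Prop :=
  ∀ ω : SchwartzMap (Ept d) (Fin d → ℂ),
    Γ (ftForm (⇑ω)) = ∫ x : Ept d, cdot (ω x) (γhat x)

/-- The weighted `L²` integrability `∫ |γ̂(x)|² |x|^{s-d} dx < ∞` defining the class `C_s`. -/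
def InWeightedL2 {d : ℕ} (s : ℝ) (γhat : CForm d) : Prop :=
  Integrable (fun x : Ept d => nsq (γhat x) * ‖x‖ ^ (s - (d : ℝ)))

/-- The `C_s`-norm `(c(s,d) ∫ |γ̂(x)|² |x|^{s-d} dx)^{1/2}`. -/
def csNorm {d : ℕ} (s : ℝ) (γhat : CForm d) : ℝ :=
  Real.sqrt (rieszConst d s * ∫ x : Ept d, nsq (γhat x) * ‖x‖ ^ (s - (d : ℝ)))


section Aux

/-- Package a smooth compactly supported function as a Schwartz map. -/
def testSchwartz {F : Type*} [NormedAddCommGroup F] [NormedSpace ℝ F]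
    {f : Ept d → F} (h1 : ContDiff ℝ (⊤ : ℕ∞) f) (h2 : HasCompactSupport f) :
    SchwartzMap (Ept d) F where
  toFun := f
  smooth' := h1.of_le (by simp)
  decay' := by
    intro k n
    have hc : Continuous fun x : Ept d => ‖x‖ ^ k * ‖iteratedFDeriv ℝ n f x‖ :=
      (continuous_norm.pow k).mul (h1.continuous_iteratedFDeriv (by exact_mod_cast le_top)).norm
    have hcs : HasCompactSupport fun x : Ept d => ‖x‖ ^ k * ‖iteratedFDeriv ℝ n f x‖ :=
      ((h2.iteratedFDeriv n).norm).mul_left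
    obtain ⟨C, hC⟩ := hc.bddAbove_range_of_hasCompactSupport hcs
    exact ⟨C, fun x => hC (Set.mem_range_self x)⟩

lemma testSchwartz_apply {F : Type*} [NormedAddCommGroup F] [NormedSpace ℝ F]
    {f : Ept d → F} (h1 : ContDiff ℝ (⊤ : ℕ∞) f) (h2 : HasCompactSupport f) (x : Ept d) :
    testSchwartz h1 h2 x = f x := rfl

open scoped FourierTransform in
lemma ftForm_eq_fourier (η : SchwartzMap (Ept d) (Fin d → ℂ)) (ξ : Ept d) (i : Fin d) :
    (∫ x : Ept d, Complex.exp (-(Complex.I) * (⟪x, ξ⟫ : ℝ)) * η x i)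
      = 𝓕 (⇑η) ((2 * π)⁻¹ • ξ) i := by
  have hint : Integrable (fun x : Ept d => 𝐞 (-(innerSL ℝ x ((2 * π)⁻¹ • ξ))) • η x) :=
    (Real.fourierIntegral_convergent_iff' (innerSL ℝ) _).2 η.integrable
  have h1 : ∀ x : Ept d, Complex.exp (-(Complex.I) * (⟪x, ξ⟫ : ℝ)) * η x i
      = (𝐞 (-(⟪x, (2 * π)⁻¹ • ξ⟫ : ℝ)) • η x) i := by
    intro x
    rw [show (𝐞 (-(⟪x, (2 * π)⁻¹ • ξ⟫ : ℝ)) • η x) i = 𝐞 (-(⟪x, (2 * π)⁻¹ • ξ⟫ : ℝ)) • η x i from rfl, Circle.smul_def, Real.fourierChar_apply, real_inner_smul_right]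
    have hπ : (2 * π) * -((2 * π)⁻¹ * (⟪x, ξ⟫ : ℝ)) = -⟪x, ξ⟫ := by
      field_simp
    rw [hπ]
    push_cast
    rw [smul_eq_mul]
    ring_nf
  have h2 : (∫ x : Ept d, (𝐞 (-(⟪x, (2 * π)⁻¹ • ξ⟫ : ℝ)) • η x) i)
      = (∫ x : Ept d, 𝐞 (-(⟪x, (2 * π)⁻¹ • ξ⟫ : ℝ)) • η x) i :=
    ((ContinuousLinearMap.proj (R := ℂ) (φ := fun _ : Fin d => ℂ) i).integral_comp_comm hint)
  rw [Real.fourier_eq]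
  simp_rw [h1]
  exact h2

end Aux

/-- If a compactly supported `1`-current `γ ∈ C_s` has `‖γ‖_{C_s} = 0`, then `γ = 0`. -/
theorem cs_norm_zero_implies_current_zero (d : ℕ) (hd : 0 < d) (s : ℝ)
    (hs : s ∈ Set.Ioo (0 : ℝ) 1) (γ : RForm d → ℝ) (hγ : IsCurrent γ)
    (K : Set (Ept d)) (hsupp : HasCptSupp γ K)
    (Γ : CForm d → ℂ) (hΓ : IsExtensionOf γ Γ)
    (γhat : CForm d) (hrep : IsFourierRep Γ γhat) (hL2 : InWeightedL2 s γhat)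
    (hnorm : csNorm s γhat = 0) :
    ∀ ω : RForm d, IsTestForm ω → γ ω = 0 := by
  intro ω hω
  obtain ⟨hs0, hs1⟩ := hs
  have hd1 : (1:ℝ) ≤ (d:ℝ) := by exact_mod_cast hd
  -- positivity of the Riesz constant
  have hRpos : 0 < rieszConst d s := by
    have h1 : (0:ℝ) < (2:ℝ) ^ ((d:ℝ) - s) := Real.rpow_pos_of_pos two_pos _
    have h2 : (0:ℝ) < Real.pi ^ ((d:ℝ)/2) := Real.rpow_pos_of_pos Real.pi_pos _
    have h3 : 0 < Real.Gamma (((d:ℝ) - s)/2) := Real.Gamma_pos_of_pos (by linarith)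
    have h4 : 0 < Real.Gamma (s/2) := Real.Gamma_pos_of_pos (by linarith)
    exact div_pos (mul_pos (mul_pos h1 h2) h3) h4
  -- the weighted integral vanishes
  have hInt_nonneg : ∀ x : Ept d, 0 ≤ nsq (γhat x) * ‖x‖ ^ (s - (d:ℝ)) := fun x =>
    mul_nonneg (Finset.sum_nonneg fun i _ => Complex.normSq_nonneg _)
      (Real.rpow_nonneg (norm_nonneg _) _)
  have hI0 : ∫ x : Ept d, nsq (γhat x) * ‖x‖ ^ (s - (d:ℝ)) = 0 := by
    have hge : 0 ≤ ∫ x : Ept d, nsq (γhat x) * ‖x‖ ^ (s - (d:ℝ)) :=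
      integral_nonneg hInt_nonneg
    have hle : rieszConst d s * ∫ x : Ept d, nsq (γhat x) * ‖x‖ ^ (s - (d:ℝ)) ≤ 0 :=
      Real.sqrt_eq_zero'.1 hnorm
    nlinarith
  -- γhat vanishes almost everywhere
  have hae : ∀ᵐ x : Ept d, γhat x = 0 := by
    have h0 : (fun x : Ept d => nsq (γhat x) * ‖x‖ ^ (s - (d:ℝ))) =ᵐ[volume] 0 :=
      (integral_eq_zero_iff_of_nonneg (fun x => hInt_nonneg x) hL2).1 hI0
    haveI : Nontrivial (Ept d) := by
      refine ⟨0, EuclideanSpace.single ⟨0, hd⟩ 1, fun h => ?_⟩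
      have := congrArg (fun v : Ept d => v ⟨0, hd⟩) h
      simp [EuclideanSpace.single_apply] at this
    have hne : ∀ᵐ x : Ept d, x ≠ 0 := by
      have hset : {x : Ept d | ¬ x ≠ 0} = {0} := by ext x; simp
      rw [ae_iff, hset]
      exact measure_singleton 0
    filter_upwards [h0, hne] with x hx hxne
    have hpow : 0 < ‖x‖ ^ (s - (d:ℝ)) :=
      Real.rpow_pos_of_pos (norm_pos_iff.2 hxne) _
    have hx' : nsq (γhat x) * ‖x‖ ^ (s - (d:ℝ)) = 0 := hx
    have hnsq : nsq (γhat x) = 0 := (mul_eq_zero.1 hx').resolve_right hpow.ne'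
    funext i
    have hterm := (Finset.sum_eq_zero_iff_of_nonneg
      (fun i _ => Complex.normSq_nonneg (γhat x i))).1 hnsq i (Finset.mem_univ i)
    exact Complex.normSq_eq_zero.1 hterm
  -- Γ vanishes on Fourier transforms of Schwartz forms
  have hΓ0 : ∀ η : SchwartzMap (Ept d) (Fin d → ℂ), Γ (ftForm (⇑η)) = 0 := by
    intro η
    rw [hrep η]
    apply integral_eq_zero_of_ae
    filter_upwards [hae] with x hx
    simp [cdot, hx]
  -- construct the scaled complex test form and its Schwartz structure
  have hc : (2 * π : ℝ) ≠ 0 := by positivity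
  set L : (Fin d → ℝ) →L[ℝ] (Fin d → ℂ) :=
    ContinuousLinearMap.pi (fun i => Complex.ofRealCLM.comp (ContinuousLinearMap.proj i))
    with hL
  have hLω : toCForm ω = fun x => L (ω x) := rfl
  have hsm : ContDiff ℝ (⊤ : ℕ∞) fun ζ : Ept d => toCForm ω ((2 * π : ℝ) • ζ) := by
    rw [hLω]
    exact L.contDiff.comp (hω.1.comp ((contDiff_id (E := Ept d)).const_smul (2 * π : ℝ)))
  have hcsupp : HasCompactSupport fun ζ : Ept d => toCForm ω ((2 * π : ℝ) • ζ) := by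
    have h1 : HasCompactSupport (toCForm ω) := by
      rw [hLω]
      exact hω.2.comp_left (by simp)
    exact h1.comp_homeomorph (Homeomorph.smulOfNeZero (2 * π : ℝ) hc)
  set W2 : SchwartzMap (Ept d) (Fin d → ℂ) := testSchwartz hsm hcsupp with hW2
  set η : SchwartzMap (Ept d) (Fin d → ℂ) := (SchwartzMap.fourierTransformCLE ℝ (SchwartzMap (Ept d) (Fin d → ℂ))).symm W2
    with hη
  have hFη : FourierTransform.fourier (⇑η) = ⇑W2 := by
    have h1 : (SchwartzMap.fourierTransformCLE ℝ (SchwartzMap (Ept d) (Fin d → ℂ))) η = W2 :=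
      (SchwartzMap.fourierTransformCLE ℝ (SchwartzMap (Ept d) (Fin d → ℂ))).apply_symm_apply W2
    rw [← h1]
    rfl
  have hft : ftForm (⇑η) = toCForm ω := by
    funext ξ i
    show (∫ x : Ept d, Complex.exp (-(Complex.I) * (⟪x, ξ⟫ : ℝ)) * η x i) = toCForm ω ξ i
    rw [ftForm_eq_fourier η ξ i, hFη]
    show toCForm ω ((2 * π : ℝ) • ((2 * π : ℝ)⁻¹ • ξ)) i = toCForm ω ξ i
    rw [smul_smul, mul_inv_cancel₀ hc, one_smul]
  have hΓω : Γ (toCForm ω) = 0 := by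
    rw [← hft]
    exact hΓ0 η
  have hre := hΓ.2.2.2 ω hω
  rw [hΓω] at hre
  exact_mod_cast hre.symm
end
end
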